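/- Let $M_1, M_2$ be nonempty compact subsets of $\mathbb{R}^D$ with $D \geq 1$. Let $z$ be a random vector taking values in $M_1$, and let $\varepsilon$ be an independent random vector in $\mathbb{R}^D$ whose coordinates are independent $N(0, \sigma^2)$ random variables with $\sigma > 0$. Set $x = z + \varepsilon$. Then for every $\delta > 0$ with $\delta^2/(4\sigma^2) > D$, $\mathbb{P}\big(d(x, M_1) > d(x, M_2)\big) \leq \mathbb{P}\big(d(z, M_2) < \delta\big) + \exp\{-\tfrac{\delta^2}{8\sigma^2} + \tfrac{D}{2}\log(\tfrac{\delta^2}{4\sigma^2}) - \tfrac{D}{2}(\log D - 1)\}$. -/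

import Mathlib

/-!
If `x = z + ε` is closer to `M₂` than to `M₁ ∋ z`, then
`d(z, M₂) ≤ d(x, M₂) + ‖ε‖ < d(x, M₁) + ‖ε‖ ≤ 2‖ε‖`, so either `d(z, M₂) < δ` or
`‖ε‖² ≥ δ²/4`. The second event is a chi-squared tail: since `E exp(t ε_i²) = (1 - 2tσ²)^(-1/2)`,
the Chernoff bound at `t = (1 - 4Dσ²/δ²)/(2σ²)` gives the exponential term.
-/

open MeasureTheory ProbabilityTheory Metric Real
open scoped NNReal

lemma gaussianPDFReal_zero_mul_exp_mul_sq (v : ℝ≥0) (t x : ℝ) :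
    gaussianPDFReal 0 v x * exp (t * x ^ 2) =
      (√(2 * π * v))⁻¹ * exp (-((2 * (v : ℝ))⁻¹ - t) * x ^ 2) := by
  rw [gaussianPDFReal, mul_assoc, ← exp_add]
  ring_nf

/-- For `2 * t * v ≥ 1` both sides are junk values `0`. -/
lemma integral_exp_mul_sq_gaussianReal (v : ℝ≥0) (t : ℝ) :
    ∫ x, exp (t * x ^ 2) ∂gaussianReal 0 v = (√(1 - 2 * t * v))⁻¹ := by
  rcases eq_or_ne v 0 with rfl | hv
  · simp [gaussianReal_zero_var]
  simp_rw [integral_gaussianReal_eq_integral_smul hv, smul_eq_mul,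
    gaussianPDFReal_zero_mul_exp_mul_sq, integral_const_mul, integral_gaussian,
    ← sqrt_inv, ← sqrt_mul (inv_nonneg.2 (by positivity : (0 : ℝ) ≤ 2 * π * v))]
  congr 1
  field_simp

section SumSq

variable {Ω ι : Type*} [MeasurableSpace Ω] {μ : Measure Ω} [Fintype ι] {X : ι → Ω → ℝ}
  {v : ℝ≥0}

lemma ProbabilityTheory.iIndepFun.mgf_sum_sq_of_map_eq_gaussianReal (hX : iIndepFun X μ)
    (hlaw : ∀ i, μ.map (X i) = gaussianReal 0 v) (t : ℝ) :
    mgf (fun ω ↦ ∑ i, X i ω ^ 2) μ t = (√(1 - 2 * t * v))⁻¹ ^ Fintype.card ι := by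
  have hmeas : ∀ i, AEMeasurable (X i) μ := fun i ↦
    .of_map_ne_zero (by rw [hlaw i]; exact IsProbabilityMeasure.ne_zero _)
  have hmgf : ∀ i, mgf (fun ω ↦ X i ω ^ 2) μ t = (√(1 - 2 * t * v))⁻¹ := fun i ↦ by
    rw [mgf, ← integral_exp_mul_sq_gaussianReal, ← hlaw i,
      integral_map (hmeas i) (by fun_prop)]
  have hsq : iIndepFun (fun i ω ↦ X i ω ^ 2) μ :=
    hX.comp (fun _ y ↦ y ^ 2) fun _ ↦ measurable_id.pow_const 2
  have := hsq.mgf_sum₀ (fun i ↦ (hmeas i).pow_const 2) Finset.univ (t := t)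
  simpa [Finset.sum_fn, hmgf] using this

lemma ProbabilityTheory.iIndepFun.measureReal_sum_sq_ge_le (hX : iIndepFun X μ)
    (hlaw : ∀ i, μ.map (X i) = gaussianReal 0 v) {t : ℝ} (ht₀ : 0 ≤ t) (ht : 2 * t * v < 1)
    (r : ℝ) :
    μ.real {ω | r ≤ ∑ i, X i ω ^ 2} ≤
      exp (-t * r) * (√(1 - 2 * t * v))⁻¹ ^ Fintype.card ι := by
  have := hX.isProbabilityMeasure
  have hmgf := hX.mgf_sum_sq_of_map_eq_gaussianReal hlaw t
  have hint : Integrable (fun ω ↦ exp (t * ∑ i, X i ω ^ 2)) μ := by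
    refine .of_integral_ne_zero ?_
    rw [← mgf, hmgf]
    exact pow_ne_zero _ (inv_ne_zero (sqrt_ne_zero'.2 (by linarith)))
  exact hmgf ▸ measure_ge_le_exp_mul_mgf r ht₀ hint

lemma ProbabilityTheory.iIndepFun.measureReal_sum_sq_ge_le_exp [Nonempty ι] (hX : iIndepFun X μ)
    (hlaw : ∀ i, μ.map (X i) = gaussianReal 0 v) {r : ℝ} (hr : (Fintype.card ι : ℝ) < r / v) :
    μ.real {ω | r ≤ ∑ i, X i ω ^ 2} ≤
      exp (-(r / v) / 2 + Fintype.card ι / 2 * log (r / v)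
        - Fintype.card ι / 2 * (log (Fintype.card ι) - 1)) := by
  set n := Fintype.card ι
  have hn : (0 : ℝ) < n := by exact_mod_cast Fintype.card_pos
  have hv : (v : ℝ) ≠ 0 := fun h ↦ by simp [h] at hr; linarith
  obtain ⟨a, rfl⟩ : ∃ a, r = a * v := ⟨r / v, by field_simp⟩
  rw [mul_div_cancel_right₀ _ hv] at hr ⊢
  have ha : 0 < a := hn.trans hr
  have hdet : 1 - 2 * ((1 - n / a) / (2 * v)) * v = n / a := by field_simp; ring
  have ht₀ : 0 ≤ (1 - n / a) / (2 * v) :=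
    div_nonneg (by rw [sub_nonneg, div_le_one ha]; exact hr.le) (by positivity)
  have ht : 2 * ((1 - n / a) / (2 * v)) * v < 1 := by linarith [div_pos hn ha]
  refine (hX.measureReal_sum_sq_ge_le hlaw ht₀ ht _).trans_eq ?_
  rw [hdet, sqrt_eq_rpow, rpow_def_of_pos (div_pos hn ha), ← exp_neg, ← exp_nat_mul, ← exp_add,
    log_div hn.ne' ha.ne']
  congr 1
  field_simp
  ring

end SumSq

lemma Metric.infDist_lt_two_mul_dist_of_infDist_lt {α : Type*} [PseudoMetricSpace α] {x y : α}
    {s t : Set α} (hy : y ∈ s) (h : infDist x t < infDist x s) :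
    infDist y t < 2 * dist x y :=
  calc infDist y t ≤ infDist x t + dist x y := dist_comm x y ▸ infDist_le_infDist_add_dist
    _ < infDist x s + dist x y := by gcongr
    _ ≤ 2 * dist x y := by linarith [infDist_le_dist_of_mem (x := x) hy]

theorem spa_oracle_inequality_general
    {Ω : Type*} [MeasurableSpace Ω] (μ : Measure Ω) [IsProbabilityMeasure μ]
    (D : ℕ) (hD : 1 ≤ D)
    (M₁ M₂ : Set (EuclideanSpace ℝ (Fin D)))
    (σ : ℝ)
    (z ε : Ω → EuclideanSpace ℝ (Fin D))
    (hzM₁ : ∀ ω, z ω ∈ M₁)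
    (hεcoord : iIndepFun (fun i ω => ε ω i) μ)
    (hgauss : ∀ i, μ.map (fun ω => ε ω i) = gaussianReal 0 ⟨σ ^ 2, sq_nonneg σ⟩)
    (δ : ℝ) (hδ : 0 < δ) (hSNR : (D : ℝ) < δ ^ 2 / (4 * σ ^ 2)) :
    μ {ω | infDist (z ω + ε ω) M₂ < infDist (z ω + ε ω) M₁} ≤
      μ {ω | infDist (z ω) M₂ < δ} +
      ENNReal.ofReal (Real.exp
        (-(δ ^ 2) / (8 * σ ^ 2) + (D : ℝ) / 2 * Real.log (δ ^ 2 / (4 * σ ^ 2))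
          - (D : ℝ) / 2 * (Real.log D - 1))) := by
  have hincl : {ω | infDist (z ω + ε ω) M₂ < infDist (z ω + ε ω) M₁} ⊆
      {ω | infDist (z ω) M₂ < δ} ∪ {ω | δ ^ 2 / 4 ≤ ∑ i, ε ω i ^ 2} := by
    intro ω hω
    refine or_iff_not_imp_left.2 fun hfar ↦ ?_
    have hnoise := infDist_lt_two_mul_dist_of_infDist_lt (hzM₁ ω) hω
    rw [dist_self_add_left] at hnoise
    have hδε : δ / 2 ≤ ‖ε ω‖ := by rw [Set.mem_ofPred_eq, not_lt] at hfar; linarith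
    rw [Set.mem_ofPred_eq, ← EuclideanSpace.real_norm_sq_eq]
    nlinarith [pow_le_pow_left₀ (by positivity) hδε 2]
  have : Nonempty (Fin D) := ⟨⟨0, hD⟩⟩
  set v : ℝ≥0 := ⟨σ ^ 2, sq_nonneg σ⟩
  have hv : (v : ℝ) = σ ^ 2 := rfl
  have htail := hεcoord.measureReal_sum_sq_ge_le_exp hgauss (r := δ ^ 2 / 4)
    (by rwa [hv, div_div, Fintype.card_fin])
  rw [hv, div_div, Fintype.card_fin] at htail
  calc _ ≤ μ ({ω | infDist (z ω) M₂ < δ} ∪ {ω | δ ^ 2 / 4 ≤ ∑ i, ε ω i ^ 2}) := measure_mono hincl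
    _ ≤ μ {ω | infDist (z ω) M₂ < δ} + μ {ω | δ ^ 2 / 4 ≤ ∑ i, ε ω i ^ 2} := measure_union_le _ _
    _ ≤ _ := by
      gcongr
      rw [ENNReal.le_ofReal_iff_toReal_le (measure_ne_top _ _) (exp_pos _).le]
      refine htail.trans_eq ?_
      ring_nf

/-- Oracle inequality from the proof of Theorem 2: if `z` takes values in the compact set
`M₁`, `ε` is an independent Gaussian noise vector with independent `N(0, σ²)` coordinates,
and `x = z + ε`, then for `δ` with `δ²/(4σ²) > D`,
`P(d(x, M₁) > d(x, M₂)) ≤ P(d(z, M₂) < δ) + exp{-δ²/(8σ²) + (D/2) log(δ²/(4σ²)) - (D/2)(log D - 1)}`. -/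
theorem spa_oracle_inequality
    {Ω : Type*} [MeasurableSpace Ω] (μ : Measure Ω) [IsProbabilityMeasure μ]
    (D : ℕ) (hD : 1 ≤ D)
    (M₁ M₂ : Set (EuclideanSpace ℝ (Fin D)))
    (hM₁ : M₁.Nonempty) (hM₂ : M₂.Nonempty)
    (hM₁c : IsCompact M₁) (hM₂c : IsCompact M₂)
    (σ : ℝ) (hσ : 0 < σ)
    (z ε : Ω → EuclideanSpace ℝ (Fin D))
    (hzmeas : Measurable z) (hεmeas : Measurable ε)
    (hzM₁ : ∀ ω, z ω ∈ M₁)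
    (hzε : IndepFun z ε μ)
    (hεcoord : iIndepFun (fun i ω => ε ω i) μ)
    (hgauss : ∀ i, μ.map (fun ω => ε ω i) = gaussianReal 0 ⟨σ ^ 2, sq_nonneg σ⟩)
    (δ : ℝ) (hδ : 0 < δ) (hSNR : (D : ℝ) < δ ^ 2 / (4 * σ ^ 2)) :
    μ {ω | infDist (z ω + ε ω) M₂ < infDist (z ω + ε ω) M₁} ≤
      μ {ω | infDist (z ω) M₂ < δ} +
      ENNReal.ofReal (Real.exp
        (-(δ ^ 2) / (8 * σ ^ 2) + (D : ℝ) / 2 * Real.log (δ ^ 2 / (4 * σ ^ 2))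
          - (D : ℝ) / 2 * (Real.log D - 1))) :=
  spa_oracle_inequality_general μ D hD M₁ M₂ σ z ε hzM₁ hεcoord hgauss δ hδ hSNR
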